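/- If X and Y are homotopy equivalent topological spaces, then X is a Dold space if and only if Y is a Dold space. -/

import Mathlib

/-! Let `F : X → Y` and `G : Y → X` with `G ∘ F ≃ id`. Pulling a numerable cover `U` of `Y` back
along `F` gives a numerable cover of `X`, and each `F⁻¹(U)` is ambiently contractible because its
inclusion is homotopic to `G ∘ F` restricted to it, which factors through the inclusion of `U`. -/

open unitInterval

universe u v w

/-- A partition of unity: continuous `[0,1]`-valued maps whose pointwise sum is `1`. -/
def IsPartitionOfUnity {ι : Type*} {X : Type*} [TopologicalSpace X]
    (f : ι → X → ℝ) : Prop :=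
  (∀ i, Continuous (f i)) ∧ (∀ i x, f i x ∈ Set.Icc (0 : ℝ) 1) ∧
    ∀ x, HasSum (fun i => f i x) 1

/-- A cover is numerable if it admits a subordinate partition of unity with
locally finite supports. -/
def IsNumerableCover {ι : Type*} {X : Type*} [TopologicalSpace X]
    (U : ι → Set X) : Prop :=
  ∃ f : ι → X → ℝ, IsPartitionOfUnity f ∧
    LocallyFinite (fun i => closure (Function.support (f i))) ∧
    ∀ i, closure (Function.support (f i)) ⊆ U i

/-- `U` is ambiently contractible to `x₀`: the inclusion `U → X` is homotopic to the
constant map at `x₀`. -/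
def AmbientlyContractibleTo {X : Type*} [TopologicalSpace X] (U : Set X) (x₀ : X) : Prop :=
  ContinuousMap.Homotopic
    (⟨Subtype.val, continuous_subtype_val⟩ : C(U, X))
    (ContinuousMap.const ↥U x₀)

/-- `U ⊆ X` is ambiently contractible: the inclusion `U → X` is nullhomotopic. -/
def AmbientlyContractible {X : Type*} [TopologicalSpace X] (U : Set X) : Prop :=
  ∃ x₀ : X, AmbientlyContractibleTo U x₀

/-- A Dold space (numerably contractible space): a space admitting a numerable cover
by ambiently contractible subsets. -/
def IsDoldSpace (X : Type u) [TopologicalSpace X] : Prop :=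
  ∃ (ι : Type u) (U : ι → Set X),
    (∀ x, ∃ i, x ∈ U i) ∧ IsNumerableCover U ∧ ∀ i, AmbientlyContractible (U i)

open Function Set

section NumerableCover

variable {X Y : Type*} [TopologicalSpace X] [TopologicalSpace Y] {ι κ : Type*}

theorem IsPartitionOfUnity.comp_continuous {f : ι → X → ℝ} (hf : IsPartitionOfUnity f)
    {F : Y → X} (hF : Continuous F) : IsPartitionOfUnity fun i y => f i (F y) :=
  ⟨fun i => (hf.1 i).comp hF, fun i y => hf.2.1 i (F y), fun y => hf.2.2 (F y)⟩

theorem IsPartitionOfUnity.comp_injective {f : ι → X → ℝ} (hf : IsPartitionOfUnity f)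
    {e : κ → ι} (he : Injective e) (hrange : ∀ x, support (fun i => f i x) ⊆ range e) :
    IsPartitionOfUnity fun k => f (e k) :=
  ⟨fun k => hf.1 (e k), fun k => hf.2.1 (e k), fun x =>
    (he.hasSum_iff fun _ hi => notMem_support.mp fun h => hi (hrange x h)).mpr (hf.2.2 x)⟩

theorem IsNumerableCover.exists_mem {U : ι → Set X} (hU : IsNumerableCover U) (x : X) :
    ∃ i, x ∈ U i := by
  obtain ⟨f, hf, -, hsub⟩ := hU
  obtain ⟨i, hi⟩ : ∃ i, f i x ≠ 0 := by
    by_contra! h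
    exact one_ne_zero ((hf.2.2 x).unique (by simp [h]))
  exact ⟨i, hsub i (subset_closure hi)⟩

theorem IsNumerableCover.preimage {U : ι → Set X} (hU : IsNumerableCover U) {F : Y → X}
    (hF : Continuous F) : IsNumerableCover fun i => F ⁻¹' U i := by
  obtain ⟨f, hf, hlf, hsub⟩ := hU
  have hclosure : ∀ i, closure (support fun y => f i (F y)) ⊆ F ⁻¹' closure (support (f i)) :=
    fun i => hF.closure_preimage_subset (support (f i))
  exact ⟨_, hf.comp_continuous hF, (hlf.preimage_continuous hF).subset hclosure,
    fun i => (hclosure i).trans (preimage_mono (hsub i))⟩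

/-- Only the countably many indices of the functions not vanishing at a given point matter, so a
numerable cover of `X` can be reindexed by a type in the universe of `X`. -/
theorem IsNumerableCover.exists_reindex {X : Type u} [TopologicalSpace X] {U : ι → Set X}
    (hU : IsNumerableCover U) : ∃ (κ : Type u) (e : κ → ι), IsNumerableCover (U ∘ e) := by
  obtain ⟨f, hf, hlf, hsub⟩ := hU
  set T : Set ι := ⋃ x, support fun i => f i x
  have : ∀ x, Countable (support fun i => f i x) := fun x =>
    (hf.2.2 x).summable.countable_support.to_subtype
  have : Small.{u} T := small_iUnion _
  let e : Shrink.{u} T → ι := Subtype.val ∘ (equivShrink T).symm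
  have he : Injective e := Subtype.val_injective.comp (equivShrink T).symm.injective
  have hrange : ∀ x, support (fun i => f i x) ⊆ range e := fun x i hi =>
    ⟨equivShrink T ⟨i, mem_iUnion_of_mem x hi⟩, by simp [e]⟩
  exact ⟨Shrink.{u} T, e, _, hf.comp_injective he hrange, hlf.comp_injective he,
    fun k => hsub (e k)⟩

end NumerableCover

theorem AmbientlyContractibleTo.preimage {X Y : Type*} [TopologicalSpace X] [TopologicalSpace Y]
    {F : C(X, Y)} {G : C(Y, X)} (hGF : (G.comp F).Homotopic (ContinuousMap.id X)) {U : Set Y}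
    {y : Y} (hU : AmbientlyContractibleTo U y) : AmbientlyContractibleTo (F ⁻¹' U) (G y) := by
  let incV : C(F ⁻¹' U, X) := ⟨Subtype.val, continuous_subtype_val⟩
  let incU : C(U, Y) := ⟨Subtype.val, continuous_subtype_val⟩
  have hincV : incV.Homotopic ((G.comp F).comp incV) := by
    simpa using hGF.symm.comp (ContinuousMap.Homotopic.refl incV)
  have hfactor : (G.comp (incU.comp (F.restrictPreimage U))).Homotopic
      (G.comp ((ContinuousMap.const U y).comp (F.restrictPreimage U))) :=
    (ContinuousMap.Homotopic.refl G).comp (hU.comp (ContinuousMap.Homotopic.refl _))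
  exact hincV.trans hfactor

theorem IsDoldSpace.of_isNumerableCover {X : Type u} [TopologicalSpace X] {ι : Type w}
    {U : ι → Set X} (hU : IsNumerableCover U) (hC : ∀ i, AmbientlyContractible (U i)) :
    IsDoldSpace X :=
  let ⟨κ, e, hUe⟩ := hU.exists_reindex
  ⟨κ, U ∘ e, hUe.exists_mem, hUe, fun k => hC (e k)⟩

theorem IsDoldSpace.of_comp_homotopic_id {X : Type u} {Y : Type v} [TopologicalSpace X]
    [TopologicalSpace Y] (F : C(X, Y)) (G : C(Y, X))
    (hGF : (G.comp F).Homotopic (ContinuousMap.id X)) (hY : IsDoldSpace Y) : IsDoldSpace X := by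
  obtain ⟨ι, U, -, hU, hC⟩ := hY
  exact .of_isNumerableCover (hU.preimage F.continuous) fun i =>
    let ⟨y, hy⟩ := hC i
    ⟨G y, hy.preimage hGF⟩

/-- being a Dold space is a homotopy invariant. -/
theorem stmt8 {X : Type u} {Y : Type v} [TopologicalSpace X] [TopologicalSpace Y]
    (h : Nonempty (ContinuousMap.HomotopyEquiv X Y)) :
    IsDoldSpace X ↔ IsDoldSpace Y := by
  obtain ⟨e⟩ := h
  exact ⟨.of_comp_homotopic_id e.invFun e.toFun e.right_inv,
    .of_comp_homotopic_id e.toFun e.invFun e.left_inv⟩
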